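/- Let H_C : ℝ^m → ℝ be positively 2-homogeneous, smooth away from 0, convex, positive away from 0, with ∇H_C : ℝ^m\{0} → ℝ^m\{0} a bijection with inverse ∇H_C*, and let φ : ℝ_{≥0} → ℝ be smooth, strictly increasing, with 0 < δ ≤ φ' ≤ η, whose composition H = φ ∘ H_C has bijective and differentiable gradient. Then for every x, ∇H*(x) = k(x) ∇H_C*(x), where k(x) is the unique solution of φ'(k² H_C*(x)) k = 1 and H* is the Fenchel conjugate of H. -/

import Mathlib

open InnerProductSpace Set

private lemma grad_zero_aux {m : ℕ} {f : EuclideanSpace ℝ (Fin m) → ℝ}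
    (h : ∀ v : EuclideanSpace ℝ (Fin m), HasDerivAt (fun t : ℝ => f (t • v)) 0 0) :
    gradient f 0 = 0 := by
  by_cases hd : DifferentiableAt ℝ f 0
  · have hz : fderiv ℝ f 0 = 0 := by
      ext v
      have hline : HasDerivAt (fun t : ℝ => (t : ℝ) • v) v 0 := by
        simpa using (hasDerivAt_id (0 : ℝ)).smul_const v
      have h1 : HasDerivAt (fun t : ℝ => f (t • v)) (fderiv ℝ f 0 v) 0 := by
        have hd' : HasFDerivAt f (fderiv ℝ f 0) ((0:ℝ) • v) := by simpa using hd.hasFDerivAt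
        have := hd'.comp_hasDerivAt (f := fun t : ℝ => t • v) 0 hline
        exact this
      have := h1.unique (h v)
      simpa using this
    rw [gradient, hz]; simp
  · exact gradient_eq_zero_of_not_differentiableAt hd



/-- For `H = φ ∘ H_C` with `H_C` positively 2-homogeneous, smooth away from `0`, convex,
positive away from `0`, whose gradient is a bijection away from `0` with inverse `∇H_C*`,
and `φ` smooth, strictly increasing with `0 < δ ≤ φ' ≤ η`, one has
`∇H*(x) = k(x) ∇H_C*(x)` where `k(x)` is the unique solution of `φ'(k² H_C*(x)) k = 1`
and `H*` is the Fenchel conjugate of `H`. -/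
theorem stmt_5 {m : ℕ} (HC HCstar Hstar : EuclideanSpace ℝ (Fin m) → ℝ)
    (φ : ℝ → ℝ) (δ η : ℝ)
    (hhom : ∀ l : ℝ, 0 ≤ l → ∀ x, HC (l • x) = l ^ 2 * HC x)
    (hsmooth : ContDiffOn ℝ (⊤ : ℕ∞) HC {0}ᶜ)
    (hconv : ConvexOn ℝ Set.univ HC)
    (hpos : ∀ x, x ≠ 0 → 0 < HC x)
    (hstarC_def : ∀ x, HCstar x = ⨆ y, ((inner ℝ x y : ℝ) - HC y))
    -- `∇H_C*` is the inverse of `∇H_C`: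
    (hinv : ∀ x, gradient HC (gradient HCstar x) = x)
    (hinv' : ∀ x, gradient HCstar (gradient HC x) = x)
    -- Fenchel duality for the 2-homogeneous function `H_C`:
    (hfenchelC : ∀ x, HC (gradient HCstar x) = HCstar x)
    (hφ : ContDiffOn ℝ (⊤ : ℕ∞) φ (Set.Ici 0))
    (hφmono : StrictMonoOn φ (Set.Ici 0))
    (hδ : 0 < δ) (hδη : δ ≤ η)
    (hderiv : ∀ s : ℝ, 0 ≤ s → δ ≤ deriv φ s ∧ deriv φ s ≤ η)
    -- the gradient of `H = φ ∘ H_C` is bijective and differentiable, with inverse `∇H*`,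
    -- where `H*` is the Fenchel conjugate of `H`:
    (hbij : Function.Bijective (fun x => gradient (φ ∘ HC) x))
    (hstar_def : ∀ x, Hstar x = ⨆ y, ((inner ℝ x y : ℝ) - (φ ∘ HC) y))
    (hstar_grad : ∀ x, gradient (φ ∘ HC) (gradient Hstar x) = x) :
    ∀ x, ∀ k : ℝ, 0 < k → deriv φ (k ^ 2 * HCstar x) * k = 1 →
      gradient Hstar x = k • gradient HCstar x := by
  intro x k hk hk1
  have hHC0 : HC 0 = 0 := by simpa using hhom 0 le_rfl 0
  have hHCnn : ∀ v, 0 ≤ HC v := by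
    intro v
    rcases eq_or_ne v 0 with rfl | hv
    · simp [hHC0]
    · exact (hpos v hv).le
  set u := gradient HCstar x with hu
  -- key claim: gradient (φ ∘ HC) (k • u) = x
  suffices key : gradient (φ ∘ HC) (k • u) = x by
    exact hbij.injective (by rw [hstar_grad x, key])
  rcases eq_or_ne u 0 with hu0 | hu0
  · -- then x = gradient HC 0 = 0 and gradient (φ∘HC) 0 = 0
    have hgHC0 : gradient HC 0 = 0 := by
      apply grad_zero_aux
      intro v
      have hright : HasDerivWithinAt (fun t : ℝ => HC (t • v)) 0 (Ici 0) 0 := by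
        have : HasDerivWithinAt (fun t : ℝ => t ^ 2 * HC v) 0 (Ici 0) 0 := by
          simpa using ((hasDerivAt_pow 2 (0:ℝ)).mul_const (HC v)).hasDerivWithinAt
        exact this.congr (fun t ht => hhom t ht v) (by simp [hHC0])
      have hleft : HasDerivWithinAt (fun t : ℝ => HC (t • v)) 0 (Iic 0) 0 := by
        have : HasDerivWithinAt (fun t : ℝ => t ^ 2 * HC (-v)) 0 (Iic 0) 0 := by
          simpa using ((hasDerivAt_pow 2 (0:ℝ)).mul_const (HC (-v))).hasDerivWithinAt
        refine this.congr (fun t ht => ?_) (by simp [hHC0])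
        have := hhom (-t) (by simpa using ht) (-v)
        simpa [smul_neg, neg_smul] using this
      have := hleft.union hright
      rwa [Iic_union_Ici, hasDerivWithinAt_univ] at this
    have hx0 : x = 0 := by
      have := hinv x
      rw [← hu, hu0, hgHC0] at this
      exact this.symm
    have hg2 : gradient (φ ∘ HC) 0 = 0 := by
      apply grad_zero_aux
      intro v
      have hφd : HasDerivWithinAt φ (derivWithin φ (Ici 0) 0) (Ici 0) 0 :=
        (hφ.differentiableOn (by simp) 0 (by simp)).hasDerivWithinAt
      have hright : HasDerivWithinAt (fun t : ℝ => (φ ∘ HC) (t • v)) 0 (Ici 0) 0 := by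
        have hin : HasDerivWithinAt (fun t : ℝ => t ^ 2 * HC v) 0 (Ici 0) 0 := by
          simpa using ((hasDerivAt_pow 2 (0:ℝ)).mul_const (HC v)).hasDerivWithinAt
        have hcomp : HasDerivWithinAt (φ ∘ fun t : ℝ => t ^ 2 * HC v)
            (derivWithin φ (Ici 0) 0 * 0) (Ici 0) 0 := by
          have hφd' : HasDerivWithinAt φ (derivWithin φ (Ici 0) 0) (Ici 0)
              ((fun t : ℝ => t ^ 2 * HC v) 0) := by
            rw [show (fun t : ℝ => t ^ 2 * HC v) 0 = 0 by simp]; exact hφd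
          refine HasDerivWithinAt.comp 0 hφd' hin ?_
          intro t _
          exact mul_nonneg (sq_nonneg t) (hHCnn v)
        rw [mul_zero] at hcomp
        exact hcomp.congr (fun t ht => by simp [Function.comp, hhom t ht v])
          (by simp [Function.comp, hHC0])
      have hleft : HasDerivWithinAt (fun t : ℝ => (φ ∘ HC) (t • v)) 0 (Iic 0) 0 := by
        have hin : HasDerivWithinAt (fun t : ℝ => t ^ 2 * HC (-v)) 0 (Iic 0) 0 := by
          simpa using ((hasDerivAt_pow 2 (0:ℝ)).mul_const (HC (-v))).hasDerivWithinAt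
        have hcomp : HasDerivWithinAt (φ ∘ fun t : ℝ => t ^ 2 * HC (-v))
            (derivWithin φ (Ici 0) 0 * 0) (Iic 0) 0 := by
          have hφd' : HasDerivWithinAt φ (derivWithin φ (Ici 0) 0) (Ici 0)
              ((fun t : ℝ => t ^ 2 * HC (-v)) 0) := by
            rw [show (fun t : ℝ => t ^ 2 * HC (-v)) 0 = 0 by simp]; exact hφd
          refine HasDerivWithinAt.comp 0 hφd' hin ?_
          intro t _
          exact mul_nonneg (sq_nonneg t) (hHCnn (-v))
        rw [mul_zero] at hcomp
        refine hcomp.congr (fun t ht => ?_) (by simp [Function.comp, hHC0])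
        have := hhom (-t) (by simpa using ht) (-v)
        simp only [Function.comp]
        rw [show t • v = (-t) • (-v) by simp, this]
        ring_nf
      have := hleft.union hright
      rwa [Iic_union_Ici, hasDerivWithinAt_univ] at this
    rw [hu0, hx0, smul_zero, hg2]
  · -- main case: u ≠ 0
    have hku : k • u ≠ 0 := smul_ne_zero hk.ne' hu0
    have hdHC : ∀ y : EuclideanSpace ℝ (Fin m), y ≠ 0 → DifferentiableAt ℝ HC y := by
      intro y hy
      exact (hsmooth.contDiffAt (isOpen_compl_singleton.mem_nhds hy)).differentiableAt (by simp)
    -- homogeneity of the derivative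
    have hfd : fderiv ℝ HC (k • u) = k • fderiv ℝ HC u := by
      have hA : HasFDerivAt (fun y : EuclideanSpace ℝ (Fin m) => k • y)
          (k • ContinuousLinearMap.id ℝ (EuclideanSpace ℝ (Fin m))) u :=
        ((ContinuousLinearMap.id ℝ (EuclideanSpace ℝ (Fin m))).hasFDerivAt.const_smul k)
      have h1 : HasFDerivAt (fun y => HC (k • y))
          ((fderiv ℝ HC (k • u)).comp (k • ContinuousLinearMap.id ℝ (EuclideanSpace ℝ (Fin m)))) u :=
        ((hdHC _ hku).hasFDerivAt).comp u hA
      have h2 : HasFDerivAt (fun y => k ^ 2 * HC y) (k ^ 2 • fderiv ℝ HC u) u := by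
        have := ((hdHC u hu0).hasFDerivAt).const_smul (k ^ 2)
        exact this
      have hfun : (fun y => HC (k • y)) = fun y => k ^ 2 * HC y :=
        funext fun y => hhom k hk.le y
      rw [hfun] at h1
      have heq := h1.unique h2
      have hcompL : (fderiv ℝ HC (k • u)).comp
          (k • ContinuousLinearMap.id ℝ (EuclideanSpace ℝ (Fin m)))
          = k • fderiv ℝ HC (k • u) := by
        ext y
        simp [map_smul, smul_eq_mul]
      rw [hcompL] at heq
      have : k • fderiv ℝ HC (k • u) = k • (k • fderiv ℝ HC u) := by
        rw [heq, smul_smul, ← pow_two]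
      exact smul_right_injective _ hk.ne' this
    have hgradu : (toDual ℝ (EuclideanSpace ℝ (Fin m))).symm (fderiv ℝ HC u) = x := hinv x
    have hupos : 0 < HCstar x := by rw [← hfenchelC x]; exact hpos _ hu0
    have hs : HC (k • u) = k ^ 2 * HCstar x := by rw [hhom k hk.le, hfenchelC]
    have hspos : 0 < HC (k • u) := hpos _ hku
    have hφder : HasDerivAt φ (deriv φ (HC (k • u))) (HC (k • u)) :=
      ((hφ.contDiffAt (Ici_mem_nhds hspos)).differentiableAt (by simp)).hasDerivAt
    have hcomp : HasFDerivAt (φ ∘ HC) (deriv φ (HC (k • u)) • fderiv ℝ HC (k • u)) (k • u) :=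
      hφder.comp_hasFDerivAt _ (hdHC _ hku).hasFDerivAt
    calc gradient (φ ∘ HC) (k • u)
        = (toDual ℝ (EuclideanSpace ℝ (Fin m))).symm
            (deriv φ (HC (k • u)) • (k • fderiv ℝ HC u)) := by
          rw [gradient, hcomp.fderiv, hfd]
      _ = deriv φ (HC (k • u)) • (k • x) := by rw [map_smul, map_smul, hgradu]
      _ = x := by rw [hs, smul_smul, hk1, one_smul]
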